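/- arXiv:1702.04031 — 3 statements merged into one kernel-verified Lean document; each statement's English description precedes it below -/
import Mathlib

section
/- Let K be a symmetric M-matrix (positive definite with nonpositive off-diagonal entries) over index set V, and let G = (V, E) be any undirected graph. Define K^G by keeping the diagonal of K and the entries K_{uv} for uv ∈ E, and setting all other off-diagonal entries to zero. Then K^G is again a symmetric M-matrix; in particular K^G is positive definite. -/
/-- Zeroing out any subset of off-diagonal entries of a symmetric M-matrix (keeping the
diagonal and the entries on the edges of a graph `G`) again yields a symmetric M-matrix;
in particular the result is positive definite. -/
theorem mMatrix_restrict_graph {p : ℕ} (K : Matrix (Fin p) (Fin p) ℝ)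
    (G : SimpleGraph (Fin p)) [DecidableRel G.Adj]
    (hPD : K.PosDef) (hoff : ∀ i j, i ≠ j → K i j ≤ 0) :
    (Matrix.of fun u v => if u = v ∨ G.Adj u v then K u v else 0).PosDef ∧
    (∀ u v, u ≠ v →
      (Matrix.of fun u v => if u = v ∨ G.Adj u v then K u v else 0) u v ≤ 0) := by
  have hKsym : ∀ i j, K j i = K i j := fun i j => by
    have := congrFun (congrFun hPD.isHermitian.symm i) j
    simpa using this.symm
  set M : Matrix (Fin p) (Fin p) ℝ :=
    Matrix.of fun u v => if u = v ∨ G.Adj u v then K u v else 0 with hM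
  have key : ∀ i j (x : Fin p → ℝ), |x i| * (K i j * |x j|) ≤ x i * (M i j * x j) := by
    intro i j x
    by_cases hij : i = j
    · subst hij
      have hMii : M i i = K i i := by simp [hM]
      rw [hMii]
      have h1 := abs_mul_abs_self (x i)
      refine le_of_eq ?_
      rw [show |x i| * (K i i * |x i|) = K i i * (|x i| * |x i|) from by ring, h1]
      ring
    · by_cases hadj : G.Adj i j
      · have hMij : M i j = K i j := by simp [hM, hadj]
        rw [hMij]
        have hK : K i j ≤ 0 := hoff i j hij
        have h1 : x i * x j ≤ |x i| * |x j| := by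
          calc x i * x j ≤ |x i * x j| := le_abs_self _
          _ = |x i| * |x j| := abs_mul _ _
        nlinarith [h1, hK]
      · have hMij : M i j = 0 := by simp [hM, hij, hadj]
        rw [hMij]
        have hK : K i j ≤ 0 := hoff i j hij
        have h2 : 0 ≤ |x i| * |x j| := mul_nonneg (abs_nonneg _) (abs_nonneg _)
        nlinarith
  refine ⟨Matrix.PosDef.of_dotProduct_mulVec_pos ?_ ?_, ?_⟩
  · ext i j
    simp only [Matrix.conjTranspose_apply, Matrix.of_apply, star_trivial, hM]
    by_cases h : i = j ∨ G.Adj i j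
    · have h' : j = i ∨ G.Adj j i := by
        rcases h with h | h
        · exact Or.inl h.symm
        · exact Or.inr h.symm
      rw [if_pos h', if_pos h, hKsym]
    · have h' : ¬(j = i ∨ G.Adj j i) := by
        intro hc
        rcases hc with hc | hc
        · exact h (Or.inl hc.symm)
        · exact h (Or.inr hc.symm)
      rw [if_neg h', if_neg h]
  · intro x hx
    have hx' : (fun i => |x i|) ≠ 0 := by
      intro h
      apply hx
      funext i
      have := congrFun h i
      simpa [abs_eq_zero] using this
    have hpos := hPD.dotProduct_mulVec_pos (x := fun i => |x i|) hx'
    have h1 : (0:ℝ) < ∑ i, ∑ j, |x i| * (K i j * |x j|) := by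
      simpa [dotProduct, Matrix.mulVec, Finset.mul_sum] using hpos
    have h2 : ∑ i, ∑ j, |x i| * (K i j * |x j|) ≤ ∑ i, ∑ j, x i * (M i j * x j) := by
      refine Finset.sum_le_sum fun i _ => Finset.sum_le_sum fun j _ => key i j x
    have : (0:ℝ) < ∑ i, ∑ j, x i * (M i j * x j) := lt_of_lt_of_le h1 h2
    simpa [dotProduct, Matrix.mulVec, Finset.mul_sum] using this
  · intro u v huv
    simp only [hM, Matrix.of_apply]
    by_cases hadj : G.Adj u v
    · rw [if_pos (Or.inr hadj)]
      exact hoff u v huv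
    · rw [if_neg (by tauto)]
end

section
/- Let R and K be symmetric p×p matrices where R_{ij} ≥ 0 for all i,j and K_{ij} ≤ 0 for all i ≠ j. Then for any diagonal sign matrix D (D_{ii} ∈ {−1, +1}), trace(D R D K) ≥ trace(R K); equivalently the Gaussian log-likelihood ℓ(K; R) = log det K − trace(RK) satisfies ℓ(K; R) ≥ ℓ(K; DRD). -/
/-! Entrywise, `trace (D R D K) - trace (R K) = ∑ i j, (dᵢ dⱼ - 1) Rᵢⱼ Kⱼᵢ`. Diagonal terms vanish
since `dᵢ² = 1`, and off the diagonal each term is a product of `dᵢ dⱼ - 1 ≤ 0`, `Rᵢⱼ ≥ 0` and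
`Kⱼᵢ ≤ 0`, hence nonnegative. -/

namespace Matrix

variable {n α : Type*} [Fintype n] [CommRing α] [LinearOrder α] [IsStrictOrderedRing α]

theorem trace_mul_le_trace_mul_of_forall {A A' B : Matrix n n α}
    (h : ∀ i j, A i j * B j i ≤ A' i j * B j i) : (A * B).trace ≤ (A' * B).trace := by
  simp only [trace, diag, mul_apply]
  exact Finset.sum_le_sum fun i _ => Finset.sum_le_sum fun j _ => h i j

theorem trace_mul_le_trace_diagonal_mul_mul_diagonal_mul [DecidableEq n]
    {R K : Matrix n n α} (hR : ∀ i j, 0 ≤ R i j) (hK : ∀ i j, i ≠ j → K i j ≤ 0)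
    {d : n → α} (hd : ∀ i, d i = 1 ∨ d i = -1) :
    (R * K).trace ≤ (diagonal d * R * diagonal d * K).trace := by
  refine trace_mul_le_trace_mul_of_forall fun i j => ?_
  rw [mul_diagonal, diagonal_mul]
  rcases eq_or_ne i j with rfl | hij
  · have hdd : d i * d i = 1 := by rcases hd i with h | h <;> simp [h]
    rw [mul_right_comm (d i), hdd, one_mul]
  · have hdd : d i * d j ≤ 1 := by
      rcases hd i with h | h <;> rcases hd j with h' | h' <;> norm_num [h, h']
    have key : 0 ≤ (1 - d i * d j) * R i j * -K j i :=
      mul_nonneg (mul_nonneg (sub_nonneg.2 hdd) (hR i j)) (neg_nonneg.2 (hK j i hij.symm))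
    linarith

end Matrix

theorem sign_switch_trace_ineq_general {p : ℕ} (R K : Matrix (Fin p) (Fin p) ℝ)
    (hR : ∀ i j, 0 ≤ R i j) (hK : ∀ i j, i ≠ j → K i j ≤ 0)
    (d : Fin p → ℝ) (hd : ∀ i, d i = 1 ∨ d i = -1) :
    (R * K).trace ≤ (Matrix.diagonal d * R * Matrix.diagonal d * K).trace :=
  Matrix.trace_mul_le_trace_diagonal_mul_mul_diagonal_mul hR hK hd

/-- For `R` entrywise nonnegative and `K` with nonpositive off-diagonal entries, any
diagonal sign switch `D` (with `D i i = ±1`) satisfies `trace(R K) ≤ trace(D R D K)`;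
equivalently, the Gaussian log-likelihood satisfies `ℓ(K; R) ≥ ℓ(K; D R D)`. -/
theorem sign_switch_trace_ineq {p : ℕ} (R K : Matrix (Fin p) (Fin p) ℝ)
    (hRsym : R.IsSymm) (hKsym : K.IsSymm)
    (hR : ∀ i j, 0 ≤ R i j) (hK : ∀ i j, i ≠ j → K i j ≤ 0)
    (d : Fin p → ℝ) (hd : ∀ i, d i = 1 ∨ d i = -1) :
    (R * K).trace ≤ (Matrix.diagonal d * R * Matrix.diagonal d * K).trace :=
  sign_switch_trace_ineq_general R K hR hK d hd
end

section
/- Let S be a symmetric 2×2 positive definite matrix and L_{12} ≥ 0 a nonnegative scalar. Then the matrix K' with entries K'_{11} = (1 + √(1 + 4 S_{11} S_{22} L_{12}²))/(2 S_{11}), K'_{22} = (1 + √(1 + 4 S_{11} S_{22} L_{12}²))/(2 S_{22}), K'_{12} = K'_{21} = −L_{12} is positive definite and satisfies the stationarity conditions (K'^{-1})_{11} = S_{11} and (K'^{-1})_{22} = S_{22}. -/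
/-!
Write `r = √(1 + 4 S₀₀ S₁₁ L²)`. Since `(1 + r)² - (r² - 1) = 2 (1 + r)`, the determinant of `K'` is
`(1 + r) / (2 S₀₀ S₁₁) > 0`, so `K'` is positive definite by Sylvester's criterion, and by Cramer's
rule `(K'⁻¹)₀₀ = K'₁₁ / det K' = S₀₀`; symmetrically `(K'⁻¹)₁₁ = S₁₁`.
-/

open Matrix

theorem Matrix.inv_fin_two_apply_zero_zero {K : Type*} [Field K] (M : Matrix (Fin 2) (Fin 2) K) :
    M⁻¹ 0 0 = M.det⁻¹ * M 1 1 := by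
  simp [inv_def, Ring.inverse_eq_inv', adjugate_fin_two]

theorem Matrix.inv_fin_two_apply_one_one {K : Type*} [Field K] (M : Matrix (Fin 2) (Fin 2) K) :
    M⁻¹ 1 1 = M.det⁻¹ * M 0 0 := by
  simp [inv_def, Ring.inverse_eq_inv', adjugate_fin_two]

theorem Matrix.posDef_fin_two_of {a b d : ℝ} (ha : 0 < a) (hdet : 0 < (!![a, b; b, d]).det) :
    (!![a, b; b, d]).PosDef := by
  rw [det_fin_two_of] at hdet
  refine PosDef.of_dotProduct_mulVec_pos ?_ fun x hx => ?_
  · ext i j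
    fin_cases i <;> fin_cases j <;> simp
  have hquad : a * (star x ⬝ᵥ !![a, b; b, d] *ᵥ x)
      = (a * x 0 + b * x 1) ^ 2 + (a * d - b * b) * x 1 ^ 2 := by
    simp only [dotProduct, mulVec, Fin.sum_univ_two, Pi.star_apply, star_trivial, of_apply,
      cons_val', cons_val_fin_one, cons_val_zero, cons_val_one]
    ring
  refine pos_of_mul_pos_right (hquad ▸ ?_) ha.le
  rcases eq_or_ne (x 1) 0 with h1 | h1
  · have h0 : x 0 ≠ 0 := fun h0 => hx (funext fun i => by fin_cases i <;> simp [h0, h1])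
    rw [h1, zero_pow two_ne_zero, mul_zero, add_zero]
    positivity
  · positivity

noncomputable def coordUpdate (a b l : ℝ) : Matrix (Fin 2) (Fin 2) ℝ :=
  !![(1 + √(1 + 4 * a * b * l ^ 2)) / (2 * a), -l;
    -l, (1 + √(1 + 4 * a * b * l ^ 2)) / (2 * b)]

section coordUpdate

variable {a b : ℝ} (l : ℝ)

theorem det_coordUpdate (ha : 0 < a) (hb : 0 < b) :
    (coordUpdate a b l).det = (1 + √(1 + 4 * a * b * l ^ 2)) / (2 * (a * b)) := by
  have hsq : √(1 + 4 * a * b * l ^ 2) ^ 2 = 1 + 4 * a * b * l ^ 2 := Real.sq_sqrt (by positivity)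
  rw [coordUpdate, det_fin_two_of]
  field_simp
  linear_combination hsq

theorem posDef_coordUpdate (ha : 0 < a) (hb : 0 < b) : (coordUpdate a b l).PosDef := by
  refine posDef_fin_two_of (by positivity) ?_
  rw [← coordUpdate, det_coordUpdate l ha hb]
  positivity

theorem inv_coordUpdate_zero_zero (ha : 0 < a) (hb : 0 < b) : (coordUpdate a b l)⁻¹ 0 0 = a := by
  rw [inv_fin_two_apply_zero_zero, det_coordUpdate l ha hb]
  simp only [coordUpdate, of_apply, cons_val', cons_val_one, cons_val_fin_one]
  field_simp

theorem inv_coordUpdate_one_one (ha : 0 < a) (hb : 0 < b) : (coordUpdate a b l)⁻¹ 1 1 = b := by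
  rw [inv_fin_two_apply_one_one, det_coordUpdate l ha hb]
  simp only [coordUpdate, of_apply, cons_val', cons_val_zero, cons_val_fin_one]
  field_simp

end coordUpdate

theorem coordinate_descent_update_general (S : Matrix (Fin 2) (Fin 2) ℝ)
    (hS : S.PosDef) (L : ℝ) :
    (!![(1 + Real.sqrt (1 + 4 * S 0 0 * S 1 1 * L ^ 2)) / (2 * S 0 0), -L;
        -L, (1 + Real.sqrt (1 + 4 * S 0 0 * S 1 1 * L ^ 2)) / (2 * S 1 1)]).PosDef ∧
    (!![(1 + Real.sqrt (1 + 4 * S 0 0 * S 1 1 * L ^ 2)) / (2 * S 0 0), -L;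
        -L, (1 + Real.sqrt (1 + 4 * S 0 0 * S 1 1 * L ^ 2)) / (2 * S 1 1)])⁻¹ 0 0
      = S 0 0 ∧
    (!![(1 + Real.sqrt (1 + 4 * S 0 0 * S 1 1 * L ^ 2)) / (2 * S 0 0), -L;
        -L, (1 + Real.sqrt (1 + 4 * S 0 0 * S 1 1 * L ^ 2)) / (2 * S 1 1)])⁻¹ 1 1
      = S 1 1 :=
  ⟨posDef_coordUpdate L hS.diag_pos hS.diag_pos, inv_coordUpdate_zero_zero L hS.diag_pos hS.diag_pos,
    inv_coordUpdate_one_one L hS.diag_pos hS.diag_pos⟩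

/-- The closed-form `2 × 2` coordinate-descent update: for `S` positive definite and
`L ≥ 0`, the matrix `K'` with the displayed entries and `K' 0 1 = K' 1 0 = -L` is
positive definite and its inverse matches `S` on the diagonal. -/
theorem coordinate_descent_update (S : Matrix (Fin 2) (Fin 2) ℝ)
    (hS : S.PosDef) (L : ℝ) (hL : 0 ≤ L) :
    (!![(1 + Real.sqrt (1 + 4 * S 0 0 * S 1 1 * L ^ 2)) / (2 * S 0 0), -L;
        -L, (1 + Real.sqrt (1 + 4 * S 0 0 * S 1 1 * L ^ 2)) / (2 * S 1 1)]).PosDef ∧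
    (!![(1 + Real.sqrt (1 + 4 * S 0 0 * S 1 1 * L ^ 2)) / (2 * S 0 0), -L;
        -L, (1 + Real.sqrt (1 + 4 * S 0 0 * S 1 1 * L ^ 2)) / (2 * S 1 1)])⁻¹ 0 0
      = S 0 0 ∧
    (!![(1 + Real.sqrt (1 + 4 * S 0 0 * S 1 1 * L ^ 2)) / (2 * S 0 0), -L;
        -L, (1 + Real.sqrt (1 + 4 * S 0 0 * S 1 1 * L ^ 2)) / (2 * S 1 1)])⁻¹ 1 1
      = S 1 1 :=
  coordinate_descent_update_general S hS L
end
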